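/- arXiv:1104.4517 — 3 statements merged into one kernel-verified Lean document; each statement's English description precedes it below -/
import Mathlib

section
/- Let K be a field of characteristic zero, let d ≥ 1, and let a : ℕ → K satisfy a(0) ≠ 0 together with the relations C(d,k)·C(d,l)·a(i)·a(j) = C(d,i)·C(d,j)·a(k)·a(l) for all i, j, k, l ≤ d−1 with i + j = k + l. Then for every m ≤ d−1, a(m) = C(d,m) · a(0) · (a(1)/(d·a(0)))^m. -/
theorem mul_eq_mul_mul_pow_of_mul_succ_eq {K : Type*} [Field K] (b a : ℕ → K) (q : K) (N : ℕ)
    (hb : ∀ n < N, b n ≠ 0) (hstep : ∀ n < N, b n * a (n + 1) = b (n + 1) * a n * q) :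
    ∀ m ≤ N, b 0 * a m = b m * a 0 * q ^ m := by
  intro m
  induction m with
  | zero => intro _; ring
  | succ n ih =>
    intro hn
    apply mul_left_cancel₀ (hb n hn)
    calc b n * (b 0 * a (n + 1)) = b 0 * (b n * a (n + 1)) := by ring
      _ = b (n + 1) * q * (b 0 * a n) := by rw [hstep n hn]; ring
      _ = b n * (b (n + 1) * a 0 * q ^ (n + 1)) := by rw [ih (Nat.le_of_succ_le hn)]; ring

theorem coeffs_determined_of_leading_coeff_ne_zero_general
    (K : Type*) [Field K] [CharZero K] (d : ℕ)
    (a : ℕ → K) (h0 : a 0 ≠ 0)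
    (hrel : ∀ i j k l : ℕ, i ≤ d - 1 → j ≤ d - 1 → k ≤ d - 1 → l ≤ d - 1 →
      i + j = k + l →
      (d.choose k : K) * (d.choose l : K) * a i * a j
        = (d.choose i : K) * (d.choose j : K) * a k * a l) :
    ∀ m ≤ d - 1, a m = (d.choose m : K) * a 0 * (a 1 / (d * a 0)) ^ m := by
  have hchoose : ∀ n < d - 1, (d.choose n : K) ≠ 0 := fun n hn =>
    Nat.cast_ne_zero.mpr (Nat.choose_pos (by omega)).ne'
  -- The relation with (i, j, k, l) = (n + 1, 0, n, 1) links consecutive coefficients.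
  have hstep : ∀ n < d - 1, (d.choose n : K) * a (n + 1)
      = (d.choose (n + 1) : K) * a n * (a 1 / (d * a 0)) := by
    intro n hn
    have hd : (d : K) ≠ 0 := Nat.cast_ne_zero.mpr (by omega)
    have key := hrel (n + 1) 0 n 1 hn (Nat.zero_le _) hn.le (by omega) rfl
    rw [Nat.choose_one_right, Nat.choose_zero_right] at key
    field_simp
    linear_combination key
  intro m hm
  simpa using mul_eq_mul_mul_pow_of_mul_succ_eq _ a _ _ hchoose hstep m hm

/-- If `a 0 ≠ 0` and the coefficients satisfy the t-eliminated orbit relations, then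
every coefficient is determined: `a m = C(d,m)·a₀·(a₁/(d·a₀))^m` for `m ≤ d-1`. -/
theorem coeffs_determined_of_leading_coeff_ne_zero
    (K : Type*) [Field K] [CharZero K] (d : ℕ) (hd : 1 ≤ d)
    (a : ℕ → K) (h0 : a 0 ≠ 0)
    (hrel : ∀ i j k l : ℕ, i ≤ d - 1 → j ≤ d - 1 → k ≤ d - 1 → l ≤ d - 1 →
      i + j = k + l →
      (d.choose k : K) * (d.choose l : K) * a i * a j
        = (d.choose i : K) * (d.choose j : K) * a k * a l) :
    ∀ m ≤ d - 1, a m = (d.choose m : K) * a 0 * (a 1 / (d * a 0)) ^ m :=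
  coeffs_determined_of_leading_coeff_ne_zero_general K d a h0 hrel
end

section
/- Let K be a field of characteristic zero, let d ≥ 1, and let a : ℕ → K satisfy a(0) ≠ 0 together with the relations C(d,k)·C(d,l)·a(i)·a(j) = C(d,i)·C(d,j)·a(k)·a(l) for all i, j, k, l ≤ d−1 with i + j = k + l. Then there exist t, c ∈ K (namely t = −a(1)/(d·a(0)) and c = a(d) − (−t)^d·a(0)) such that, in the polynomial ring K[x,y], Σ_{i=0}^{d} a(i)·x^{d−i}·y^{i} = a(0)·(x − t·y)^d + c·y^d. -/
open MvPolynomial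

/-!
Comparing the coefficients `a n` and `a (n + 1)` through the relation with `(i, j, k, l) =
(n, 1, n + 1, 0)` shows by induction that `a i = a₀ · s^i · C(d, i)` for `i ≤ d - 1`, where
`s = a₁ / (d · a₀)`. Hence all but the last term of the form agree with those of the binomial
expansion of `a₀ (x + s y)^d`, and the last term is absorbed into `c · y^d`.
-/

theorem eq_mul_pow_mul_choose_of_orbit_relations {K : Type*} [Field K] [CharZero K] {d : ℕ}
    {a : ℕ → K} (h0 : a 0 ≠ 0)
    (hrel : ∀ i j k l : ℕ, i ≤ d - 1 → j ≤ d - 1 → k ≤ d - 1 → l ≤ d - 1 →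
      i + j = k + l →
      (d.choose k : K) * (d.choose l : K) * a i * a j
        = (d.choose i : K) * (d.choose j : K) * a k * a l) :
    ∀ i ≤ d - 1, a i = a 0 * (a 1 / ((d : K) * a 0)) ^ i * (d.choose i : K) := by
  set s := a 1 / ((d : K) * a 0)
  intro i hi
  induction i with
  | zero => simp
  | succ n ih =>
    have hd : (d : K) ≠ 0 := Nat.cast_ne_zero.mpr (by omega)
    have hchoose : (d.choose n : K) ≠ 0 := Nat.cast_ne_zero.mpr (Nat.choose_pos (by omega)).ne'
    have ha1 : a 1 = s * ((d : K) * a 0) := (div_mul_cancel₀ _ (mul_ne_zero hd h0)).symm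
    have hstep := hrel n 1 (n + 1) 0 (by omega) (by omega) hi (by omega) (by omega)
    rw [ih (by omega), ha1, Nat.choose_zero_right, Nat.choose_one_right] at hstep
    refine mul_right_cancel₀ (mul_ne_zero (mul_ne_zero hchoose hd) h0) ?_
    linear_combination -hstep

theorem sum_mul_pow_mul_pow_eq_mul_add_pow_add {R : Type*} [CommRing R] {d : ℕ} (b : ℕ → R)
    (x y s b₀ : R) (hb : ∀ i < d, b i = b₀ * s ^ i * (d.choose i : R)) :
    ∑ i ∈ Finset.range (d + 1), b i * x ^ (d - i) * y ^ i
      = b₀ * (x + s * y) ^ d + (b d - s ^ d * b₀) * y ^ d := by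
  rw [add_comm x, add_pow, Finset.mul_sum, Finset.sum_range_succ, Finset.sum_range_succ,
    Finset.sum_congr rfl fun i hi => by rw [hb i (Finset.mem_range.mp hi)]]
  simp only [Nat.sub_self, Nat.choose_self, mul_pow]
  ring_nf

theorem form_in_unipotent_orbit_of_leading_coeff_ne_zero_general
    (K : Type*) [Field K] [CharZero K] (d : ℕ)
    (a : ℕ → K) (h0 : a 0 ≠ 0)
    (hrel : ∀ i j k l : ℕ, i ≤ d - 1 → j ≤ d - 1 → k ≤ d - 1 → l ≤ d - 1 →
      i + j = k + l →
      (d.choose k : K) * (d.choose l : K) * a i * a j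
        = (d.choose i : K) * (d.choose j : K) * a k * a l) :
    ∃ t c : K, t = -(a 1) / ((d : K) * a 0) ∧ c = a d - (-t) ^ d * a 0 ∧
      (∑ i ∈ Finset.range (d + 1),
          C (a i) * X 0 ^ (d - i) * X 1 ^ i : MvPolynomial (Fin 2) K)
        = C (a 0) * (X 0 - C t * X 1) ^ d + C c * X 1 ^ d := by
  refine ⟨_, _, rfl, rfl, ?_⟩
  have hcoeff := eq_mul_pow_mul_choose_of_orbit_relations h0 hrel
  rw [sum_mul_pow_mul_pow_eq_mul_add_pow_add (fun i => C (a i)) _ _ (C (a 1 / ((d : K) * a 0)))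
    (C (a 0)) fun i hi => by rw [hcoeff i (by omega)]; simp]
  simp [sub_eq_add_neg, neg_div]

/-- A binary form `Σ a(i)·x^(d-i)·y^i` with `a 0 ≠ 0` whose coefficients satisfy the
t-eliminated orbit relations lies in the unipotent orbit of the family `a₀x^d + c·y^d`:
with `t = -a₁/(d·a₀)` and `c = a_d - (-t)^d·a₀` it equals `a₀(x - ty)^d + c·y^d`. -/
theorem form_in_unipotent_orbit_of_leading_coeff_ne_zero
    (K : Type*) [Field K] [CharZero K] (d : ℕ) (hd : 1 ≤ d)
    (a : ℕ → K) (h0 : a 0 ≠ 0)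
    (hrel : ∀ i j k l : ℕ, i ≤ d - 1 → j ≤ d - 1 → k ≤ d - 1 → l ≤ d - 1 →
      i + j = k + l →
      (d.choose k : K) * (d.choose l : K) * a i * a j
        = (d.choose i : K) * (d.choose j : K) * a k * a l) :
    ∃ t c : K, t = -(a 1) / ((d : K) * a 0) ∧ c = a d - (-t) ^ d * a 0 ∧
      (∑ i ∈ Finset.range (d + 1),
          C (a i) * X 0 ^ (d - i) * X 1 ^ i : MvPolynomial (Fin 2) K)
        = C (a 0) * (X 0 - C t * X 1) ^ d + C c * X 1 ^ d :=
  form_in_unipotent_orbit_of_leading_coeff_ne_zero_general K d a h0 hrel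
end

section
/- Let K be a field of characteristic zero, let n ≥ 1 and d ≥ 2, and let a be a K-valued function on exponent vectors i : Fin (n+1) → ℕ. For an exponent vector i with Σ_m i(m) = d, write M(i) for the multinomial coefficient d!/(i(0)!·…·i(n)!). Suppose that for all exponent vectors i, j, k, l, each with coordinate sum d, satisfying i + j = k + l (pointwise) and i(0) ≥ 1, j(0) ≥ 1, k(0) ≥ 1, l(0) ≥ 1, one has M(k)·M(l)·a(i)·a(j) = M(i)·M(j)·a(k)·a(l). If a(d·e₀) = 0, where d·e₀ is the exponent vector with first coordinate d and all other coordinates 0, then a(i) = 0 for every exponent vector i with coordinate sum d and i(0) ≥ 2. -/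
/-! Induct downwards on the degree `i o ≥ 2` in the distinguished variable. If `i` involves
another variable `m`, moving one unit of degree from `m` to `o` gives `k` and the reverse move
gives `l`, with `i + i = k + l`. The relation for `(i, i, k, l)` reads
`M k * M l * a i * a i = M i * M i * a k * a l`, where `a k = 0` by induction; multinomial
coefficients do not vanish in characteristic zero, so `a i = 0`. Otherwise `i = Pi.single o d`. -/

section ExponentVectors

variable {ι : Type*} [DecidableEq ι]

theorem eq_single_of_forall_ne_eq_zero {o : ι} {i : ι → ℕ} (h : ∀ m ≠ o, i m = 0) :
    i = Pi.single o (i o) := by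
  funext m
  by_cases hm : m = o
  · subst hm; simp
  · simp [hm, h m hm]

theorem exists_eq_add_single_add_single {o m : ι} {i : ι → ℕ} (hmo : m ≠ o) (ho : i o ≠ 0)
    (hm : i m ≠ 0) : ∃ j : ι → ℕ, i = j + Pi.single o 1 + Pi.single m 1 := by
  refine ⟨i - Pi.single o 1 - Pi.single m 1, funext fun x => ?_⟩
  by_cases hxo : x = o
  · subst hxo; simp [hmo.symm]; omega
  · by_cases hxm : x = m
    · subst hxm; simp [hxo]; omega
    · simp [hxo, hxm]

variable [Fintype ι]

theorem sum_add_single (j : ι → ℕ) (o : ι) (c : ℕ) :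
    ∑ x, (j + Pi.single o c : ι → ℕ) x = ∑ x, j x + c := by
  simp [Finset.sum_add_distrib]

theorem apply_eq_zero_of_diagonal_relations {K : Type*} [Semiring K] [NoZeroDivisors K]
    [CharZero K] {o : ι} {d : ℕ} {a : (ι → ℕ) → K}
    (hrel : ∀ i k l : ι → ℕ, (∑ m, i m) = d → (∑ m, k m) = d → (∑ m, l m) = d →
      i + i = k + l → 1 ≤ i o → 1 ≤ k o → 1 ≤ l o →
      (Nat.multinomial Finset.univ k : K) * (Nat.multinomial Finset.univ l : K) * a i * a i
        = (Nat.multinomial Finset.univ i : K) * (Nat.multinomial Finset.univ i : K)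
          * a k * a l)
    (h0 : a (Pi.single o d) = 0) (i : ι → ℕ) (hi : (∑ m, i m) = d) (hio : 2 ≤ i o) :
    a i = 0 := by
  induction hN : d - i o using Nat.strong_induction_on generalizing i with
  | _ N ih =>
  by_cases hsupp : ∃ m ≠ o, i m ≠ 0
  · obtain ⟨m, hmo, hm⟩ := hsupp
    obtain ⟨j, hij⟩ := exists_eq_add_single_add_single hmo (by omega) hm
    have hj : ∑ x, j x + 2 = d := by rw [← hi, hij, sum_add_single, sum_add_single]
    have hjo : i o = j o + 1 := by simp [hij, hmo.symm]
    have hjo_le : j o ≤ ∑ x, j x :=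
      Finset.single_le_sum (fun _ _ => Nat.zero_le _) (Finset.mem_univ o)
    have hdiag : i + i = j + Pi.single o 2 + (j + Pi.single m 2) := by
      rw [hij, show (2 : ℕ) = 1 + 1 from rfl, Pi.single_add, Pi.single_add]; abel
    have hk : a (j + Pi.single o 2) = 0 :=
      ih (d - (j o + 2)) (by omega) _ (by rw [sum_add_single, hj]) (by simp) (by simp)
    have h := hrel i (j + Pi.single o 2) (j + Pi.single m 2) hi
      (by rw [sum_add_single, hj]) (by rw [sum_add_single, hj]) hdiag (by omega) (by simp)
      (by simp [hmo.symm]; omega)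
    have hM : ∀ f : ι → ℕ, (Nat.multinomial Finset.univ f : K) ≠ 0 :=
      fun f => Nat.cast_ne_zero.mpr (Nat.multinomial_pos _ _).ne'
    simpa [hk, hM] using h
  · push Not at hsupp
    rw [eq_single_of_forall_ne_eq_zero hsupp, ← Fintype.sum_eq_single o hsupp, hi]
    exact h0

end ExponentVectors

theorem coeffs_vanish_of_leading_coeff_zero_multivariate_general
    (K : Type*) [Field K] [CharZero K] (n d : ℕ)
    (a : (Fin (n + 1) → ℕ) → K)
    (hrel : ∀ i j k l : Fin (n + 1) → ℕ,
      (∑ m, i m) = d → (∑ m, j m) = d → (∑ m, k m) = d → (∑ m, l m) = d →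
      i + j = k + l →
      1 ≤ i 0 → 1 ≤ j 0 → 1 ≤ k 0 → 1 ≤ l 0 →
      (Nat.multinomial Finset.univ k : K) * (Nat.multinomial Finset.univ l : K)
          * a i * a j
        = (Nat.multinomial Finset.univ i : K) * (Nat.multinomial Finset.univ j : K)
          * a k * a l)
    (h0 : a (Pi.single 0 d) = 0) :
    ∀ i : Fin (n + 1) → ℕ, (∑ m, i m) = d → 2 ≤ i 0 → a i = 0 :=
  apply_eq_zero_of_diagonal_relations
    (fun i k l hi hk hl hikl hio hko hlo => hrel i i k l hi hi hk hl hikl hio hio hko hlo) h0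

/-- Multivariate analogue: if the coefficients `a i` of the first coordinate `q₀` of a
self-map of ℙⁿ satisfy the t-eliminated multinomial relations (for exponent vectors of
coordinate sum `d` with positive first coordinate), and the `x₀^d`-coefficient vanishes,
then every coefficient of a monomial with `x₀`-degree at least `2` vanishes. -/
theorem coeffs_vanish_of_leading_coeff_zero_multivariate
    (K : Type*) [Field K] [CharZero K] (n d : ℕ) (hn : 1 ≤ n) (hd : 2 ≤ d)
    (a : (Fin (n + 1) → ℕ) → K)
    (hrel : ∀ i j k l : Fin (n + 1) → ℕ,
      (∑ m, i m) = d → (∑ m, j m) = d → (∑ m, k m) = d → (∑ m, l m) = d →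
      i + j = k + l →
      1 ≤ i 0 → 1 ≤ j 0 → 1 ≤ k 0 → 1 ≤ l 0 →
      (Nat.multinomial Finset.univ k : K) * (Nat.multinomial Finset.univ l : K)
          * a i * a j
        = (Nat.multinomial Finset.univ i : K) * (Nat.multinomial Finset.univ j : K)
          * a k * a l)
    (h0 : a (Pi.single 0 d) = 0) :
    ∀ i : Fin (n + 1) → ℕ, (∑ m, i m) = d → 2 ≤ i 0 → a i = 0 :=
  coeffs_vanish_of_leading_coeff_zero_multivariate_general K n d a hrel h0
end
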